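/- arXiv:1403.0356 — 2 statements merged into one kernel-verified Lean document; each statement's English description precedes it below -/
import Mathlib

section
/- Let A be a dissipative operator on a Hilbert space H such that Id − A is surjective (A is m-dissipative). Then A generates a strongly continuous semigroup of contractions on H (Lumer–Phillips theorem). -/
/-!
Dissipativity gives `‖u‖² ≤ re ⟪u, u - c A u⟫`, so for `c ≥ 0` the map `Id - c A : D → H` is
injective with a contractive left inverse `J_c`, and the range condition forces `D` to be dense.
Surjectivity of `Id - c A` passes from `c` to every `d > c / 2` by a Neumann series, so the
resolvents `J_n` exist for `c_n = (2/3)^n → 0`. The Yosida approximations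
`B_n = c_n⁻¹ (J_n - 1)` are bounded, commute, generate contraction semigroups, and
`B_n u = J_n (A u) → A u` on `D`. For commuting generators of contraction semigroups
`‖exp (t B) x - exp (t C) x‖ ≤ t ‖B x - C x‖`, so `exp (t B_n) x` converges, on `D` and then by
equicontinuity everywhere; the limit inherits the semigroup law and contractivity, is strongly
continuous, and differentiating at `0` recovers `A` on `D`.
-/

open NormedSpace Filter Topology Set
open scoped InnerProductSpace UniformConvergence

namespace NormedSpace

variable {𝔸 : Type*} [NormedRing 𝔸] [NormedAlgebra ℝ 𝔸] [CompleteSpace 𝔸]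

theorem exp_add_of_commute_real {x y : 𝔸} (hxy : Commute x y) : exp (x + y) = exp x * exp y := by
  let := NormedAlgebra.restrictScalars ℚ ℝ 𝔸
  exact exp_add_of_commute hxy

omit [CompleteSpace 𝔸] in
theorem norm_exp_le_exp_norm [NormOneClass 𝔸] (x : 𝔸) : ‖exp x‖ ≤ Real.exp ‖x‖ := by
  have hterm : ∀ n : ℕ, ‖(n.factorial⁻¹ : ℝ) • x ^ n‖ ≤ ‖x‖ ^ n / n.factorial := fun n => by
    rw [norm_smul, norm_inv, Real.norm_natCast, inv_mul_eq_div]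
    gcongr
    exact norm_pow_le x n
  rw [exp_eq_tsum ℝ, Real.exp_eq_exp_ℝ, exp_eq_tsum_div]
  exact (norm_tsum_le_tsum_norm (norm_expSeries_summable' x)).trans
    (Summable.tsum_le_tsum hterm (norm_expSeries_summable' x) (Real.summable_pow_div_factorial _))

theorem norm_exp_smul_sub_one_le_one [NormOneClass 𝔸] {x : 𝔸} (hx : ‖x‖ ≤ 1) {s : ℝ}
    (hs : 0 ≤ s) : ‖exp (s • (x - 1))‖ ≤ 1 := by
  have hsplit : s • (x - 1) = s • x + algebraMap ℝ 𝔸 (-s) := by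
    rw [Algebra.algebraMap_eq_smul_one, smul_sub, neg_smul, sub_eq_add_neg]
  rw [hsplit, exp_add_of_commute_real (Algebra.commutes _ _).symm, ← algebraMap_exp_comm,
    ← Real.exp_eq_exp_ℝ, Algebra.algebraMap_eq_smul_one, mul_smul_one]
  calc ‖Real.exp (-s) • exp (s • x)‖ ≤ Real.exp (-s) * Real.exp (s * 1) := by
        rw [norm_smul, Real.norm_of_nonneg (Real.exp_nonneg _)]
        gcongr
        refine (norm_exp_le_exp_norm _).trans (Real.exp_le_exp.2 ?_)
        rw [norm_smul, Real.norm_of_nonneg hs]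
        gcongr
    _ = 1 := by rw [mul_one, ← Real.exp_add, neg_add_cancel, Real.exp_zero]

end NormedSpace

section Contractions

variable {ι 𝕜 X Y : Type*} [NontriviallyNormedField 𝕜] [NormedAddCommGroup X] [NormedSpace 𝕜 X]
  [NormedAddCommGroup Y] [NormedSpace 𝕜 Y]

theorem ContinuousLinearMap.dist_apply_le_of_norm_le_one {T : X →L[𝕜] Y} (hT : ‖T‖ ≤ 1)
    (x y : X) : dist (T x) (T y) ≤ dist x y := by
  simpa using (T.lipschitz.weaken (show ‖T‖₊ ≤ 1 from hT)).dist_le_mul x y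

theorem cauchySeq_apply_of_dense {S : ℕ → X →L[𝕜] Y} (hS : ∀ n, ‖S n‖ ≤ 1) {s : Set X}
    (hs : Dense s) (h : ∀ v ∈ s, CauchySeq (S · v)) (x : X) : CauchySeq (S · x) := by
  rw [Metric.cauchySeq_iff']
  intro ε hε
  obtain ⟨v, hvs, hxv⟩ := hs.exists_dist_lt x (show 0 < ε / 3 by positivity)
  obtain ⟨N, hN⟩ := Metric.cauchySeq_iff'.1 (h v hvs) (ε / 3) (by positivity)
  refine ⟨N, fun n hn => ?_⟩
  calc dist (S n x) (S N x) ≤ dist (S n x) (S n v) + dist (S n v) (S N v) + dist (S N v) (S N x) :=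
        dist_triangle4 _ _ _ _
    _ < ε / 3 + ε / 3 + ε / 3 := by
        gcongr
        · exact ((S n).dist_apply_le_of_norm_le_one (hS n) x v).trans_lt hxv
        · exact hN n hn
        · rw [dist_comm]
          exact ((S N).dist_apply_le_of_norm_le_one (hS N) x v).trans_lt hxv
    _ = ε := by ring

theorem exists_tendsto_apply_of_cauchySeq [CompleteSpace Y] {S : ℕ → X →L[𝕜] Y}
    (hS : ∀ n, ‖S n‖ ≤ 1) (h : ∀ x, CauchySeq (S · x)) :
    ∃ T : X →L[𝕜] Y, ‖T‖ ≤ 1 ∧ ∀ x, Tendsto (S · x) atTop (𝓝 (T x)) := by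
  choose f hf using fun x => cauchySeq_tendsto_of_complete (h x)
  let L : X →ₗ[𝕜] Y := linearMapOfTendsto f (fun n => (S n : X →ₗ[𝕜] Y)) (tendsto_pi_nhds.2 hf)
  have hL : ∀ x, ‖L x‖ ≤ 1 * ‖x‖ := fun x => by
    rw [one_mul]
    exact le_of_tendsto (hf x).norm (Eventually.of_forall fun n =>
      ((S n).le_opNorm x).trans (mul_le_of_le_one_left (norm_nonneg x) (hS n)))
  exact ⟨L.mkContinuous 1 hL, LinearMap.mkContinuous_norm_le _ zero_le_one _, hf⟩

theorem tendsto_apply_of_dense {l : Filter ι} {S : ι → X →L[𝕜] Y} (hS : ∀ i, ‖S i‖ ≤ 1)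
    (T : X →L[𝕜] Y) {s : Set X} (hs : Dense s) (h : ∀ v ∈ s, Tendsto (S · v) l (𝓝 (T v)))
    (x : X) : Tendsto (S · x) l (𝓝 (T x)) := by
  have hequi : Equicontinuous fun i => (S i : X → Y) :=
    (LipschitzWith.uniformEquicontinuous _ 1 fun i =>
      LipschitzWith.of_dist_le_mul fun x y => by
        simpa using (S i).dist_apply_le_of_norm_le_one (hS i) x y).equicontinuous
  have hclosed := hequi.isClosed_setOfPred_tendsto (l := l) T.continuous
  exact hclosed.closure_subset_iff.2 h (hs.closure_eq ▸ Set.mem_univ x)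

theorem tendsto_apply_of_tendsto {l : Filter ι} {S : ι → X →L[𝕜] Y} {T : X →L[𝕜] Y}
    (hS : ∀ i, ‖S i‖ ≤ 1) (hST : ∀ x, Tendsto (S · x) l (𝓝 (T x))) {r : ι → X} {y : X}
    (hr : Tendsto r l (𝓝 y)) : Tendsto (fun i => S i (r i)) l (𝓝 (T y)) := by
  rw [tendsto_iff_dist_tendsto_zero] at hr ⊢
  have hbound : ∀ i, dist (S i (r i)) (T y) ≤ dist (r i) y + dist (S i y) (T y) := fun i =>
    (dist_triangle _ (S i y) _).trans
      (by gcongr; exact (S i).dist_apply_le_of_norm_le_one (hS i) _ _)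
  have hlim := hr.add (tendsto_iff_dist_tendsto_zero.1 (hST y))
  rw [add_zero] at hlim
  exact squeeze_zero (fun i => dist_nonneg) hbound hlim

theorem continuousOn_apply_of_dense {α : Type*} [TopologicalSpace α] {T : α → X →L[𝕜] Y}
    {s : Set α} (hT : ∀ t ∈ s, ‖T t‖ ≤ 1) {D : Set X} (hD : Dense D)
    (h : ∀ v ∈ D, ContinuousOn (T · v) s) (x : X) : ContinuousOn (T · x) s := by
  let Φ : X → (s →ᵤ Y) := fun x => UniformFun.ofFun fun t => T t x
  have hΦ : LipschitzWith 1 Φ := UniformFun.lipschitzWith_ofFun_iff.2 fun t =>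
    LipschitzWith.of_dist_le_mul fun x y => by
      simpa using (T t).dist_apply_le_of_norm_le_one (hT t t.2) x y
  have hclosed : IsClosed {x | Continuous (UniformFun.toFun (Φ x))} :=
    (UniformFun.isClosed_setOfPred_continuous s).preimage hΦ.continuous
  simp only [continuousOn_iff_continuous_domRestrict] at h ⊢
  exact hclosed.closure_subset_iff.2 h (hD.closure_eq ▸ Set.mem_univ x)

end Contractions

section ExpOperator

variable {X : Type*} [NormedAddCommGroup X] [NormedSpace ℂ X] [CompleteSpace X]

theorem hasDerivAt_exp_smul_apply (B : X →L[ℂ] X) (x : X) (t : ℝ) :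
    HasDerivAt (fun s : ℝ => exp (s • B) x) (exp (t • B) (B x)) t := by
  simpa [Function.comp_def] using
    ((ContinuousLinearMap.apply ℂ X x).restrictScalars ℝ).hasFDerivAt.comp_hasDerivAt t
      (hasDerivAt_exp_smul_const B t)

variable {B C : X →L[ℂ] X}

omit [CompleteSpace X] in
theorem norm_exp_smul_apply_le (hB : ∀ t : ℝ, 0 ≤ t → ‖exp (t • B)‖ ≤ 1) {t : ℝ} (ht : 0 ≤ t)
    (x : X) : ‖exp (t • B) x‖ ≤ ‖x‖ := by
  simpa using (exp (t • B)).le_of_opNorm_le (hB t ht) x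

/-- Differentiate `s ↦ exp (t C) (exp (s (B - C)) x) = exp ((t - s) C) (exp (s B) x)`. -/
theorem norm_exp_smul_apply_sub_exp_smul_apply_le (hB : ∀ t : ℝ, 0 ≤ t → ‖exp (t • B)‖ ≤ 1)
    (hC : ∀ t : ℝ, 0 ≤ t → ‖exp (t • C)‖ ≤ 1) (hBC : Commute B C) {t : ℝ} (ht : 0 ≤ t) (x : X) :
    ‖exp (t • B) x - exp (t • C) x‖ ≤ t * ‖B x - C x‖ := by
  have hsplit : ∀ s : ℝ, exp (t • C) * exp (s • (B - C)) = exp ((t - s) • C) * exp (s • B) := by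
    intro s
    rw [← exp_add_of_commute_real (((hBC.sub_left (Commute.refl C)).symm.smul_left t).smul_right s),
      ← exp_add_of_commute_real ((hBC.symm.smul_left (t - s)).smul_right s)]
    congr 1
    rw [smul_sub, sub_smul]
    abel
  have hderiv : ∀ s ∈ Icc 0 t, HasDerivWithinAt (fun s : ℝ => exp (t • C) (exp (s • (B - C)) x))
      (exp (t • C) (exp (s • (B - C)) ((B - C) x))) (Icc 0 t) s := fun s _ =>
    (((exp (t • C)).restrictScalars ℝ).hasFDerivAt.comp_hasDerivAt s
      (hasDerivAt_exp_smul_apply (B - C) x s)).hasDerivWithinAt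
  have hbound : ∀ s ∈ Ico 0 t, ‖exp (t • C) (exp (s • (B - C)) ((B - C) x))‖ ≤ ‖B x - C x‖ := by
    intro s hs
    rw [← mul_apply_eq_comp, hsplit, mul_apply_eq_comp]
    exact (norm_exp_smul_apply_le hC (by linarith [hs.2]) _).trans
      (norm_exp_smul_apply_le hB hs.1 _)
  have h := norm_image_sub_le_of_norm_deriv_le_segment' hderiv hbound t ⟨ht, le_rfl⟩
  rw [← mul_apply_eq_comp, hsplit, sub_self, zero_smul, exp_zero, one_mul,
    zero_smul, exp_zero, one_apply_eq_self] at h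
  simpa [mul_comm] using h

theorem norm_exp_smul_apply_sub_le (hB : ∀ t : ℝ, 0 ≤ t → ‖exp (t • B)‖ ≤ 1) {t : ℝ} (ht : 0 ≤ t)
    (x : X) : ‖exp (t • B) x - x‖ ≤ t * ‖B x‖ := by
  have h0 : ∀ t : ℝ, 0 ≤ t → ‖exp (t • (0 : X →L[ℂ] X))‖ ≤ 1 := fun t _ => by
    rw [smul_zero, exp_zero]
    exact ContinuousLinearMap.norm_id_le
  simpa using norm_exp_smul_apply_sub_exp_smul_apply_le hB h0 (Commute.zero_right B) ht x

theorem norm_exp_smul_apply_sub_le_add (hB : ∀ t : ℝ, 0 ≤ t → ‖exp (t • B)‖ ≤ 1) {t : ℝ}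
    (ht : 0 ≤ t) (x y : X) : ‖exp (t • B) x - x‖ ≤ 2 * ‖x - y‖ + t * ‖B y‖ := by
  have hsplit : exp (t • B) x - x = exp (t • B) (x - y) + (exp (t • B) y - y) + (y - x) := by
    rw [map_sub]; abel
  rw [hsplit]
  refine (norm_add₃_le ..).trans ?_
  rw [norm_sub_rev y x]
  linarith [norm_exp_smul_apply_le hB ht (x - y), norm_exp_smul_apply_sub_le hB ht y]

theorem norm_exp_smul_apply_sub_sub_le {t M : ℝ} (ht : 0 ≤ t) {x : X}
    (hM : ∀ s ∈ Icc 0 t, ‖exp (s • B) (B x) - B x‖ ≤ M) :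
    ‖exp (t • B) x - x - t • B x‖ ≤ M * t := by
  have hderiv : ∀ s ∈ Icc 0 t, HasDerivWithinAt (fun s : ℝ => exp (s • B) x - s • B x)
      (exp (s • B) (B x) - B x) (Icc 0 t) s := fun s _ =>
    ((hasDerivAt_exp_smul_apply B x s).sub ((hasDerivAt_id s).smul_const (B x))).hasDerivWithinAt
      |>.congr_deriv (by simp)
  have h := norm_image_sub_le_of_norm_deriv_le_segment' hderiv
    (fun s hs => hM s (Ico_subset_Icc_self hs)) t ⟨ht, le_rfl⟩
  simpa [sub_right_comm] using h

end ExpOperator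

structure IsContractionSemigroup {𝕜 X : Type*} [NontriviallyNormedField 𝕜] [NormedAddCommGroup X]
    [NormedSpace 𝕜 X] (T : ℝ → X →L[𝕜] X) : Prop where
  map_zero : T 0 = 1
  map_add : ∀ s t : ℝ, 0 ≤ s → 0 ≤ t → T (s + t) = (T s).comp (T t)
  norm_le_one : ∀ t : ℝ, 0 ≤ t → ‖T t‖ ≤ 1
  continuousOn : ∀ x : X, ContinuousOn (fun t => T t x) (Ici 0)

section ExpLimit

variable {X : Type*} [NormedAddCommGroup X] [NormedSpace ℂ X] [CompleteSpace X]

def IsExpLimit (B : ℕ → X →L[ℂ] X) (T : ℝ → X →L[ℂ] X) : Prop :=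
  ∀ t : ℝ, 0 ≤ t → ∀ x, Tendsto (fun n => exp (t • B n) x) atTop (𝓝 (T t x))

variable {B : ℕ → X →L[ℂ] X} (hcomm : ∀ n m, Commute (B n) (B m))
  (hB : ∀ n (t : ℝ), 0 ≤ t → ‖exp (t • B n)‖ ≤ 1)
  {D : Submodule ℂ X} (hD : Dense (D : Set X)) {A : D →ₗ[ℂ] X}
  (hBA : ∀ u : D, Tendsto (fun n => B n u) atTop (𝓝 (A u)))

include hcomm hB in
theorem cauchySeq_exp_smul_apply {t : ℝ} (ht : 0 ≤ t) {x : X} (hx : CauchySeq (B · x)) :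
    CauchySeq fun n => exp (t • B n) x := by
  rw [Metric.cauchySeq_iff] at hx ⊢
  intro ε hε
  obtain ⟨N, hN⟩ := hx (ε / (t + 1)) (by positivity)
  refine ⟨N, fun m hm n hn => ?_⟩
  have hmn := hN m hm n hn
  rw [dist_eq_norm] at hmn ⊢
  calc ‖exp (t • B m) x - exp (t • B n) x‖ ≤ t * ‖B m x - B n x‖ :=
        norm_exp_smul_apply_sub_exp_smul_apply_le (hB m) (hB n) (hcomm m n) ht x
    _ ≤ t * (ε / (t + 1)) := by gcongr
    _ < ε := by
        rw [mul_div_assoc', div_lt_iff₀ (by positivity)]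
        nlinarith

include hcomm hB hD hBA in
theorem exists_isExpLimit :
    ∃ T : ℝ → X →L[ℂ] X, IsExpLimit B T ∧ ∀ t : ℝ, 0 ≤ t → ‖T t‖ ≤ 1 := by
  have (t : ℝ) : ∃ T : X →L[ℂ] X, 0 ≤ t →
      (∀ x, Tendsto (fun n => exp (t • B n) x) atTop (𝓝 (T x))) ∧ ‖T‖ ≤ 1 := by
    by_cases ht : 0 ≤ t
    · obtain ⟨T, hTn, hT⟩ := exists_tendsto_apply_of_cauchySeq (fun n => hB n t ht)
        (cauchySeq_apply_of_dense (fun n => hB n t ht) hD fun v hv =>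
          cauchySeq_exp_smul_apply hcomm hB ht (hBA ⟨v, hv⟩).cauchySeq)
      exact ⟨T, fun _ => ⟨hT, hTn⟩⟩
    · exact ⟨0, fun h => absurd h ht⟩
  choose T hT using this
  exact ⟨T, fun t ht => (hT t ht).1, fun t ht => (hT t ht).2⟩

namespace IsExpLimit

variable {T : ℝ → X →L[ℂ] X} (hT : IsExpLimit B T)
include hT

omit [CompleteSpace X] in
theorem map_zero : T 0 = 1 := by
  ext x
  exact tendsto_nhds_unique (hT 0 le_rfl x) (by simp)

include hB in
theorem map_add {s t : ℝ} (hs : 0 ≤ s) (ht : 0 ≤ t) : T (s + t) = (T s).comp (T t) := by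
  ext x
  refine tendsto_nhds_unique (hT (s + t) (add_nonneg hs ht) x) ?_
  simp_rw [add_smul, exp_add_of_commute_real (((Commute.refl _).smul_left s).smul_right t),
    mul_apply_eq_comp]
  exact tendsto_apply_of_tendsto (fun n => hB n s hs) (hT s hs) (hT t ht x)

include hB hBA in
theorem norm_apply_sub_le {t : ℝ} (ht : 0 ≤ t) (v : D) : ‖T t v - v‖ ≤ t * ‖A v‖ :=
  le_of_tendsto_of_tendsto' ((hT t ht v).sub_const _).norm ((hBA v).norm.const_mul t)
    fun n => norm_exp_smul_apply_sub_le (hB n) ht v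

include hB hBA in
theorem continuousOn_apply (hTn : ∀ t : ℝ, 0 ≤ t → ‖T t‖ ≤ 1) (v : D) :
    ContinuousOn (fun t => T t v) (Ici 0) := by
  have hle : ∀ s t : ℝ, 0 ≤ s → s ≤ t → dist (T t v) (T s v) ≤ ‖A v‖ * dist t s := by
    intro s t hs hst
    have hts : T t = (T s).comp (T (t - s)) := by
      rw [← hT.map_add hB hs (sub_nonneg.2 hst), add_sub_cancel]
    rw [dist_eq_norm, hts, ContinuousLinearMap.comp_apply, ← map_sub, Real.dist_eq,
      abs_of_nonneg (sub_nonneg.2 hst), mul_comm]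
    exact ((T s).le_of_opNorm_le (hTn s hs) _).trans (by
      simpa using hT.norm_apply_sub_le hB hBA (sub_nonneg.2 hst) v)
  refine (LipschitzOnWith.of_dist_le_mul fun t ht s hs => ?_).continuousOn (K := ‖A v‖₊)
  rcases le_total s t with hst | hts
  · exact hle s t hs hst
  · rw [dist_comm, dist_comm t]
    exact hle t s ht hts

include hB hBA in
theorem norm_apply_sub_sub_le {t : ℝ} (ht : 0 ≤ t) (u v : D) :
    ‖T t u - u - t • A u‖ ≤ (2 * ‖A u - v‖ + t * ‖A v‖) * t := by
  refine le_of_tendsto_of_tendsto' (((hT t ht u).sub_const _).sub ((hBA u).const_smul t)).norm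
    ((((hBA u).sub_const _).norm.const_mul 2).add ((hBA v).norm.const_mul t) |>.mul_const t)
    fun n => norm_exp_smul_apply_sub_sub_le ht fun s hs => ?_
  refine (norm_exp_smul_apply_sub_le_add (hB n) hs.1 _ v).trans ?_
  gcongr
  exact hs.2

include hB hD hBA in
theorem hasDerivWithinAt_apply (u : D) : HasDerivWithinAt (fun t => T t u) (A u) (Ici 0) 0 := by
  rw [hasDerivWithinAt_iff_isLittleO, Asymptotics.isLittleO_iff]
  intro ε hε
  obtain ⟨v, hv, huv⟩ := hD.exists_dist_lt (A u) (show 0 < ε / 4 by positivity)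
  have hsmall : ∀ᶠ t in 𝓝[Ici 0] (0 : ℝ), t * ‖A ⟨v, hv⟩‖ < ε / 2 :=
    nhdsWithin_le_nhds (((continuous_mul_const _).tendsto' 0 0 (zero_mul _)).eventually
      (gt_mem_nhds (by positivity)))
  filter_upwards [self_mem_nhdsWithin, hsmall] with t (ht : 0 ≤ t) hts
  rw [hT.map_zero, one_apply_eq_self, sub_zero, Real.norm_of_nonneg ht]
  refine (hT.norm_apply_sub_sub_le hB hBA ht u ⟨v, hv⟩).trans ?_
  rw [← dist_eq_norm]
  gcongr
  linarith

end IsExpLimit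

include hcomm hB hD hBA in
theorem exists_isContractionSemigroup_of_tendsto :
    ∃ T : ℝ → X →L[ℂ] X, IsContractionSemigroup T ∧
      ∀ u : D, HasDerivWithinAt (fun t => T t u) (A u) (Ici 0) 0 := by
  obtain ⟨T, hT, hTn⟩ := exists_isExpLimit hcomm hB hD hBA
  refine ⟨T, ⟨hT.map_zero, fun s t hs ht => hT.map_add hB hs ht, hTn, fun x => ?_⟩,
    hT.hasDerivWithinAt_apply hB hD hBA⟩
  exact continuousOn_apply_of_dense hTn hD (fun v hv => hT.continuousOn_apply hB hBA hTn ⟨v, hv⟩) x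

end ExpLimit

section Resolvent

variable {X : Type*} [NormedAddCommGroup X] [NormedSpace ℂ X] {D : Submodule ℂ X}

noncomputable def idSubSmul (A : D →ₗ[ℂ] X) (c : ℝ) : D →ₗ[ℂ] X :=
  D.subtype - (c : ℂ) • A

theorem idSubSmul_apply (A : D →ₗ[ℂ] X) (c : ℝ) (u : D) :
    idSubSmul A c u = (u : X) - (c : ℂ) • A u :=
  rfl

structure IsResolvent (A : D →ₗ[ℂ] X) (c : ℝ) (J : X →L[ℂ] X) : Prop where
  surjective : Function.Surjective (idSubSmul A c)
  apply_idSubSmul : ∀ u : D, J (idSubSmul A c u) = u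

namespace IsResolvent

variable {A : D →ₗ[ℂ] X} {c d : ℝ} {J K : X →L[ℂ] X}

theorem exists_apply_eq (hJ : IsResolvent A c J) (f : X) :
    ∃ w : D, J f = w ∧ idSubSmul A c w = f := by
  obtain ⟨w, rfl⟩ := hJ.surjective f
  exact ⟨w, hJ.apply_idSubSmul w, rfl⟩

theorem apply_sub_self (hJ : IsResolvent A c J) (u : D) : J u - u = (c : ℂ) • J (A u) := by
  have h := hJ.apply_idSubSmul u
  rw [idSubSmul_apply, map_sub, map_smul] at h
  linear_combination (norm := module) h

theorem smul_sub_one_apply (hJ : IsResolvent A c J) (hc : c ≠ 0) (u : D) :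
    (c⁻¹ • (J - 1)) u = J (A u) := by
  rw [smul_apply, sub_apply, one_apply_eq_self,
    hJ.apply_sub_self, Complex.coe_smul, smul_smul, inv_mul_cancel₀ hc, one_smul]

/-- If `(Id - c A) w' = w`, then `A w' = c⁻¹ (w' - w)` lies in `D` and `(Id - c A) (A w') = A w`. -/
theorem exists_apply_eq_and_apply_map (hJ : IsResolvent A c J) (hc : c ≠ 0) (w : D) :
    ∃ w' : D, J w = w' ∧ J (A w) = A w' := by
  obtain ⟨w', hJw, hw'⟩ := hJ.exists_apply_eq w
  have hc' : (c : ℂ) ≠ 0 := Complex.ofReal_ne_zero.2 hc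
  let z : D := (c : ℂ)⁻¹ • (w' - w)
  have hz : (z : X) = A w' := by
    rw [idSubSmul_apply] at hw'
    simp only [z, Submodule.coe_smul, Submodule.coe_sub, ← hw', sub_sub_cancel, smul_smul,
      inv_mul_cancel₀ hc', one_smul]
  have hAz : idSubSmul A c z = A w := by
    rw [idSubSmul_apply, hz, map_smul, map_sub, smul_smul, mul_inv_cancel₀ hc', one_smul,
      sub_sub_cancel]
  exact ⟨w', hJw, by rw [← hAz, hJ.apply_idSubSmul, hz]⟩

theorem commute (hJ : IsResolvent A c J) (hK : IsResolvent A d K) (hc : c ≠ 0) :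
    Commute J K := by
  ext f
  obtain ⟨w, hKw, rfl⟩ := hK.exists_apply_eq f
  obtain ⟨w', hJw, hJAw⟩ := hJ.exists_apply_eq_and_apply_map hc w
  rw [mul_apply_eq_comp, mul_apply_eq_comp, hK.apply_idSubSmul, hJw, idSubSmul_apply, map_sub,
    map_smul, hJw, hJAw, ← idSubSmul_apply, hK.apply_idSubSmul]

theorem tendsto_apply {ι : Type*} {l : Filter ι} {c : ι → ℝ} {J : ι → X →L[ℂ] X}
    (hJ : ∀ i, IsResolvent A (c i) (J i)) (hJn : ∀ i, ‖J i‖ ≤ 1) (hc : Tendsto c l (𝓝 0))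
    (hD : Dense (D : Set X)) (x : X) : Tendsto (fun i => J i x) l (𝓝 x) := by
  refine tendsto_apply_of_dense hJn 1 hD (fun v hv => ?_) x
  rw [one_apply_eq_self, tendsto_iff_norm_sub_tendsto_zero]
  refine squeeze_zero (fun i => norm_nonneg _) (fun i => ?_)
    ((hc.norm.mul_const ‖A ⟨v, hv⟩‖).trans_eq (by rw [norm_zero, zero_mul]))
  rw [(hJ i).apply_sub_self ⟨v, hv⟩, norm_smul, Complex.norm_real]
  gcongr
  exact (J i).le_of_opNorm_le (hJn i) _ |>.trans_eq (one_mul _)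

/-- Solving `(Id - d A) w = f` amounts to inverting `Id - (1 - c / d) J` for `J = (Id - c A)⁻¹`,
which is possible by a Neumann series once `c < 2 d`. -/
theorem surjective_idSubSmul [CompleteSpace X] (hJ : IsResolvent A c J) (hJn : ‖J‖ ≤ 1)
    (hc : 0 < c) (hcd : c < 2 * d) : Function.Surjective (idSubSmul A d) := by
  have hd : 0 < d := by linarith
  have hc' : (c : ℂ) ≠ 0 := Complex.ofReal_ne_zero.2 hc.ne'
  have hd' : (d : ℂ) ≠ 0 := Complex.ofReal_ne_zero.2 hd.ne'
  have hr : ‖(1 - (c : ℂ) / d) • J‖ < 1 := by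
    have hcd' : |1 - c / d| < 1 := by
      rw [abs_sub_lt_iff]
      constructor <;> linarith [div_pos hc hd, (div_lt_iff₀ hd).2 hcd]
    rw [norm_smul]
    calc ‖1 - (c : ℂ) / d‖ * ‖J‖ ≤ |1 - c / d| * 1 := by
          gcongr
          exact_mod_cast (Complex.norm_real (1 - c / d)).le
      _ < 1 := by rwa [mul_one]
  let U := Units.oneSub _ hr
  intro f
  obtain ⟨w, hJw, hw⟩ := hJ.exists_apply_eq (((U⁻¹ : (X →L[ℂ] X)ˣ) : X →L[ℂ] X) (((c : ℂ) / d) • f))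
  have hU : ((U * U⁻¹ : (X →L[ℂ] X)ˣ) : X →L[ℂ] X) (((c : ℂ) / d) • f) = ((c : ℂ) / d) • f := by
    rw [mul_inv_cancel, Units.val_one, one_apply_eq_self]
  rw [Units.val_mul, mul_apply_eq_comp, Units.val_oneSub, sub_apply,
    one_apply_eq_self, smul_apply, hJw] at hU
  refine ⟨w, ?_⟩
  rw [idSubSmul_apply] at hw ⊢
  linear_combination (norm := match_scalars) ((d : ℂ) / c) • hw + ((d : ℂ) / c) • hU
  all_goals field_simp
  all_goals ring

end IsResolvent

end Resolvent

section Dissipative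

variable {H : Type*} [NormedAddCommGroup H] [InnerProductSpace ℂ H] {D : Submodule ℂ H}

def IsDissipative (A : D →ₗ[ℂ] H) : Prop :=
  ∀ u : D, (⟪A u, (u : H)⟫_ℂ).re ≤ 0

namespace IsDissipative

variable {A : D →ₗ[ℂ] H} {c : ℝ}

theorem norm_sq_le_re_inner (hA : IsDissipative A) (hc : 0 ≤ c) (u : D) :
    ‖(u : H)‖ ^ 2 ≤ (⟪(u : H), idSubSmul A c u⟫_ℂ).re := by
  rw [idSubSmul_apply, inner_sub_right, inner_smul_right, Complex.sub_re, Complex.re_ofReal_mul,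
    ← inner_conj_symm (u : H) (A u), Complex.conj_re]
  have hu : (⟪(u : H), (u : H)⟫_ℂ).re = ‖(u : H)‖ ^ 2 := inner_self_eq_norm_sq (𝕜 := ℂ) _
  nlinarith [hA u]

theorem norm_le_norm_idSubSmul (hA : IsDissipative A) (hc : 0 ≤ c) (u : D) :
    ‖(u : H)‖ ≤ ‖idSubSmul A c u‖ := by
  have h := (hA.norm_sq_le_re_inner hc u).trans
    ((Complex.re_le_norm _).trans (norm_inner_le_norm _ _))
  nlinarith [norm_nonneg (u : H), norm_nonneg (idSubSmul A c u)]

theorem injective_idSubSmul (hA : IsDissipative A) (hc : 0 ≤ c) :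
    Function.Injective (idSubSmul A c) := by
  rw [← LinearMap.ker_eq_bot, LinearMap.ker_eq_bot']
  intro u hu
  have h := hA.norm_le_norm_idSubSmul hc u
  rw [hu, norm_zero, norm_le_zero_iff] at h
  exact Subtype.ext h

/-- A vector `f = w - A w` orthogonal to `D` satisfies `‖w‖² ≤ re ⟪w, f⟫ = 0`. -/
theorem dense [CompleteSpace H] (hA : IsDissipative A)
    (hsurj : Function.Surjective (idSubSmul A 1)) : Dense (D : Set H) := by
  rw [Submodule.dense_iff_topologicalClosure_eq_top, Submodule.topologicalClosure_eq_top_iff,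
    Submodule.eq_bot_iff]
  intro f hf
  obtain ⟨w, rfl⟩ := hsurj f
  have h := hA.norm_sq_le_re_inner zero_le_one w
  rw [Submodule.inner_right_of_mem_orthogonal w.2 hf, Complex.zero_re, sq_nonpos_iff,
    norm_eq_zero] at h
  rw [idSubSmul_apply, h, (show w = 0 from Subtype.ext h), map_zero, smul_zero, sub_zero]

theorem exists_isResolvent (hA : IsDissipative A) (hc : 0 ≤ c)
    (hsurj : Function.Surjective (idSubSmul A c)) :
    ∃ J : H →L[ℂ] H, ‖J‖ ≤ 1 ∧ IsResolvent A c J := by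
  let e := LinearEquiv.ofBijective (idSubSmul A c) ⟨hA.injective_idSubSmul hc, hsurj⟩
  have hbound : ∀ f, ‖(D.subtype ∘ₗ e.symm.toLinearMap) f‖ ≤ 1 * ‖f‖ := fun f => by
    have h := hA.norm_le_norm_idSubSmul hc (e.symm f)
    rwa [show idSubSmul A c (e.symm f) = f from e.apply_symm_apply f, ← one_mul ‖f‖] at h
  refine ⟨LinearMap.mkContinuous _ 1 hbound, LinearMap.mkContinuous_norm_le _ zero_le_one _,
    hsurj, fun u => ?_⟩
  exact congrArg Subtype.val (e.symm_apply_apply u)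

theorem surjective_idSubSmul_pow [CompleteSpace H] (hA : IsDissipative A)
    (h1 : Function.Surjective (idSubSmul A 1)) (n : ℕ) :
    Function.Surjective (idSubSmul A ((2 / 3) ^ n)) := by
  induction n with
  | zero => simpa using h1
  | succ n ih =>
    obtain ⟨J, hJn, hJ⟩ := hA.exists_isResolvent (by positivity) ih
    refine hJ.surjective_idSubSmul hJn (by positivity) ?_
    rw [pow_succ]
    linarith [pow_pos (show (0 : ℝ) < 2 / 3 by norm_num) n]

/-- The Yosida approximations `B_n = c_n⁻¹ (J_n - 1)`, with `J_n = (Id - c_n A)⁻¹` and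
`c_n = (2/3)^n`. -/
theorem exists_yosidaApproximation [CompleteSpace H] (hA : IsDissipative A)
    (h1 : Function.Surjective (idSubSmul A 1)) :
    ∃ B : ℕ → H →L[ℂ] H, (∀ n m, Commute (B n) (B m)) ∧
      (∀ n (t : ℝ), 0 ≤ t → ‖exp (t • B n)‖ ≤ 1) ∧
      ∀ u : D, Tendsto (fun n => B n u) atTop (𝓝 (A u)) := by
  have hc (n : ℕ) : (0 : ℝ) < (2 / 3) ^ n := by positivity
  choose J hJn hJ using fun n => hA.exists_isResolvent (hc n).le (hA.surjective_idSubSmul_pow h1 n)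
  refine ⟨fun n => ((2 / 3 : ℝ) ^ n)⁻¹ • (J n - 1), fun n m => ?_, fun n t ht => ?_, fun u => ?_⟩
  · have hJJ := (hJ n).commute (hJ m) (hc n).ne'
    exact (((hJJ.sub_right (Commute.one_right _)).sub_left
      ((Commute.one_left _).sub_right (Commute.one_right _))).smul_left _).smul_right _
  · rcases subsingleton_or_nontrivial H with hH | hH
    · simp [Subsingleton.elim (exp _) (0 : H →L[ℂ] H)]
    · rw [smul_smul]
      exact norm_exp_smul_sub_one_le_one (hJn n) (by positivity)
  · simp_rw [(hJ _).smul_sub_one_apply (hc _).ne']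
    exact IsResolvent.tendsto_apply hJ hJn
      (tendsto_pow_atTop_nhds_zero_of_lt_one (by norm_num) (by norm_num)) (hA.dense h1) (A u)

end IsDissipative

end Dissipative

/-- Lumer–Phillips: a dissipative operator `A` on a Hilbert space
with `Id − A` surjective generates a strongly continuous semigroup of
contractions: there exists a family `(T t)_{t ≥ 0}` of contractions, strongly
continuous, satisfying the semigroup law, whose generator extends `A`. -/
theorem stmt5 {H : Type*} [NormedAddCommGroup H] [InnerProductSpace ℂ H] [CompleteSpace H]
    (D : Submodule ℂ H) (A : D →ₗ[ℂ] H)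
    (hdiss : ∀ u : D, (⟪A u, (u : H)⟫_ℂ).re ≤ 0)
    (hsurj : ∀ F : H, ∃ w : D, (w : H) - A w = F) :
    ∃ T : ℝ → H →L[ℂ] H,
      T 0 = 1 ∧
      (∀ s t : ℝ, 0 ≤ s → 0 ≤ t → T (s + t) = (T s).comp (T t)) ∧
      (∀ t : ℝ, 0 ≤ t → ‖T t‖ ≤ 1) ∧
      (∀ x : H, ContinuousOn (fun t => T t x) (Set.Ici 0)) ∧
      (∀ u : D, HasDerivWithinAt (fun t => T t (u : H)) (A u) (Set.Ici 0) 0) := by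
  have hA : IsDissipative A := hdiss
  have h1 : Function.Surjective (idSubSmul A 1) := fun f => by
    obtain ⟨w, hw⟩ := hsurj f
    exact ⟨w, by rwa [idSubSmul_apply, Complex.ofReal_one, one_smul]⟩
  obtain ⟨B, hcomm, hB, hBA⟩ := hA.exists_yosidaApproximation h1
  obtain ⟨T, hT, hderiv⟩ := exists_isContractionSemigroup_of_tendsto hcomm hB (hA.dense h1) hBA
  exact ⟨T, hT.map_zero, hT.map_add, hT.norm_le_one, hT.continuousOn, hderiv⟩
end

section
/- Let U ⊆ ℝⁿ be a bounded open set, ψ ∈ C^∞(closure(U)) real-valued with |∇ψ(x)| ≥ c > 0 for all x in closure(U), and φ = e^{λψ}. Define p_φ(x,ξ) = |ξ + i∇φ(x)|² = |ξ|² − |∇φ(x)|² + 2i⟨ξ, ∇φ(x)⟩. Then for all (x,ξ) with p_φ(x,ξ) = 0, the Poisson bracket satisfies {Re p_φ, Im p_φ}(x,ξ) = 4 e^{3λψ(x)}(λ⁴|∇ψ(x)|⁴ + O(λ³)), where the O(λ³) is uniform over closure(U) × {ξ : p_φ(x,ξ)=0}. In particular, for λ large enough there is C' > 0 such that p_φ(x,ξ)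 = 0 implies {Re p_φ, Im p_φ}(x,ξ) ≥ C'. -/
open scoped InnerProductSpace

/-- The Poisson bracket `{a, b}(x, ξ) = ⟨∇_ξ a, ∇_x b⟩ − ⟨∇_x a, ∇_ξ b⟩` of two
symbols `a b : ℝⁿ × ℝⁿ → ℝ`. -/
noncomputable def poissonBracket {n : ℕ}
    (a b : EuclideanSpace ℝ (Fin n) → EuclideanSpace ℝ (Fin n) → ℝ)
    (x ξ : EuclideanSpace ℝ (Fin n)) : ℝ :=
  ⟪gradient (fun η => a x η) ξ, gradient (fun y => b y ξ) x⟫_ℝ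
    - ⟪gradient (fun y => a y ξ) x, gradient (fun η => b x η) ξ⟫_ℝ

open InnerProductSpace

section Aux
variable {F : Type*} [NormedAddCommGroup F] [InnerProductSpace ℝ F] [CompleteSpace F]

lemma hasGradientAt_inner_right (v x : F) : HasGradientAt (fun η => ⟪η, v⟫_ℝ) v x := by
  apply hasGradientAt_iff_hasFDerivAt.mpr
  have h : (fun η : F => ⟪η, v⟫_ℝ) = ⇑(toDual ℝ F v) := by
    ext η; simp [real_inner_comm]
  rw [h]; exact (toDual ℝ F v).hasFDerivAt

lemma hasGradientAt_norm_sq (ξ : F) : HasGradientAt (fun η : F => ‖η‖ ^ 2) ((2:ℝ) • ξ) ξ := by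
  apply hasGradientAt_iff_hasFDerivAt.mpr
  have h1 := (hasFDerivAt_id ξ).inner ℝ (hasFDerivAt_id ξ)
  have h2 : (fun η : F => ‖η‖ ^ 2) = fun η : F => ⟪η, η⟫_ℝ := by
    ext η; rw [real_inner_self_eq_norm_sq]
  rw [h2]
  refine h1.congr_fderiv ?_
  ext η
  simp [fderivInnerCLM_apply, real_inner_comm, inner_add_left]
  ring

lemma HasGradientAt.const_mul' {f : F → ℝ} {u x : F} (c : ℝ) (h : HasGradientAt f u x) :
    HasGradientAt (fun y => c * f y) (c • u) x := by
  apply hasGradientAt_iff_hasFDerivAt.mpr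
  have := h.hasFDerivAt.const_mul c
  exact this.congr_fderiv (by simp)

lemma HasGradientAt.mul' {f g : F → ℝ} {u v : F} {x : F}
    (hf : HasGradientAt f u x) (hg : HasGradientAt g v x) :
    HasGradientAt (fun y => f y * g y) (f x • v + g x • u) x := by
  apply hasGradientAt_iff_hasFDerivAt.mpr
  have := hf.hasFDerivAt.mul hg.hasFDerivAt
  exact this.congr_fderiv (by simp)

lemma HasGradientAt.sub_const' {f : F → ℝ} {u x : F} (c : ℝ) (h : HasGradientAt f u x) :
    HasGradientAt (fun y => f y - c) u x := by
  apply hasGradientAt_iff_hasFDerivAt.mpr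
  exact h.hasFDerivAt.sub_const c

lemma HasGradientAt.const_sub' {f : F → ℝ} {u x : F} (c : ℝ) (h : HasGradientAt f u x) :
    HasGradientAt (fun y => c - f y) (-u) x := by
  apply hasGradientAt_iff_hasFDerivAt.mpr
  have := h.hasFDerivAt.const_sub c
  exact this.congr_fderiv (by simp)

lemma hasGradientAt_exp_comp {ψ : F → ℝ} {x : F} (lam : ℝ) (hψ : DifferentiableAt ℝ ψ x) :
    HasGradientAt (fun y => Real.exp (lam * ψ y))
      ((lam * Real.exp (lam * ψ x)) • gradient ψ x) x := by
  apply hasGradientAt_iff_hasFDerivAt.mpr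
  have h1 : HasFDerivAt (fun y => lam * ψ y) (lam • toDual ℝ F (gradient ψ x)) x :=
    hψ.hasGradientAt.hasFDerivAt.const_mul lam
  have h2 := (Real.hasDerivAt_exp (lam * ψ x)).comp_hasFDerivAt x h1
  refine h2.congr_fderiv ?_
  simp [smul_smul, mul_comm]

lemma hasGradientAt_inner_comp {g : F → F} {x : F} (hg : DifferentiableAt ℝ g x) (ξ : F) :
    HasGradientAt (fun y => ⟪ξ, g y⟫_ℝ)
      ((toDual ℝ F).symm ((innerSL ℝ ξ).comp (fderiv ℝ g x))) x := by
  apply hasGradientAt_iff_hasFDerivAt.mpr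
  rw [LinearIsometryEquiv.apply_symm_apply]
  exact (innerSL ℝ ξ).hasFDerivAt.comp x hg.hasFDerivAt

lemma norm_grad_inner_comp {g : F → F} {x : F} (ξ : F) :
    ‖(toDual ℝ F).symm ((innerSL ℝ ξ).comp (fderiv ℝ g x))‖ ≤ ‖ξ‖ * ‖fderiv ℝ g x‖ := by
  rw [LinearIsometryEquiv.norm_map]
  calc ‖(innerSL ℝ ξ).comp (fderiv ℝ g x)‖ ≤ ‖innerSL ℝ ξ‖ * ‖fderiv ℝ g x‖ :=
        ContinuousLinearMap.opNorm_comp_le _ _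
    _ = ‖ξ‖ * ‖fderiv ℝ g x‖ := by rw [innerSL_apply_norm]

lemma contDiff_gradient {f : F → ℝ} (hf : ContDiff ℝ (⊤ : ℕ∞) f) : ContDiff ℝ (⊤ : ℕ∞) (gradient f) := by
  have h : ContDiff ℝ (⊤ : ℕ∞) (fderiv ℝ f) := hf.fderiv_right (m := (⊤ : ℕ∞)) (by simp)
  exact ((toDual ℝ F).symm.contDiff).comp h

end Aux

lemma key {n : ℕ} (ψ : EuclideanSpace ℝ (Fin n) → ℝ) (hψ : ContDiff ℝ (⊤ : ℕ∞) ψ)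
    (lam : ℝ) (hlam : 0 < lam) (x ξ : EuclideanSpace ℝ (Fin n))
    (h1 : ⟪ξ, gradient (fun y => Real.exp (lam * ψ y)) x⟫_ℝ = 0)
    (h2 : ‖ξ‖ ^ 2 = ‖gradient (fun y => Real.exp (lam * ψ y)) x‖ ^ 2) :
    |poissonBracket
        (fun z ζ => ‖ζ‖ ^ 2 - ‖gradient (fun y => Real.exp (lam * ψ y)) z‖ ^ 2)
        (fun z ζ => 2 * ⟪ζ, gradient (fun y => Real.exp (lam * ψ y)) z⟫_ℝ) x ξ
      - 4 * Real.exp (3 * lam * ψ x) * lam ^ 4 * ‖gradient ψ x‖ ^ 4|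
    ≤ (4 * ‖fderiv ℝ (gradient ψ) x‖ * ‖gradient ψ x‖ ^ 2
        + 2 * ‖gradient (fun y => ‖gradient ψ y‖ ^ 2) x‖ * ‖gradient ψ x‖)
        * lam ^ 3 * Real.exp (3 * lam * ψ x) := by
  have hψd : Differentiable ℝ ψ := hψ.differentiable (by simp)
  have hgd : Differentiable ℝ (gradient ψ) := (contDiff_gradient hψ).differentiable (by simp)
  set g : EuclideanSpace ℝ (Fin n) → EuclideanSpace ℝ (Fin n) := gradient ψ with hgdef
  set r : EuclideanSpace ℝ (Fin n) → ℝ := fun y => Real.exp (lam * ψ y) with hrdef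
  have hrpos : ∀ y, 0 < r y := fun y => Real.exp_pos _
  have hr' : ∀ y, HasGradientAt r ((lam * r y) • g y) y := fun y =>
    hasGradientAt_exp_comp lam (hψd y)
  have hG : ∀ y, gradient r y = (lam * r y) • g y := fun y => (hr' y).gradient
  -- the constraint
  have hs : ⟪ξ, g x⟫_ℝ = 0 := by
    have h1' : (lam * r x) * ⟪ξ, g x⟫_ℝ = 0 := by
      rw [← real_inner_smul_right, ← hG x]; exact h1
    have hne : lam * r x ≠ 0 := by positivity
    exact (mul_eq_zero.mp h1').resolve_left hne
  -- gradients in ξ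
  have e1 : gradient (fun η : EuclideanSpace ℝ (Fin n) => ‖η‖ ^ 2 - ‖gradient r x‖ ^ 2) ξ = (2:ℝ) • ξ :=
    ((hasGradientAt_norm_sq ξ).sub_const' _).gradient
  have e2 : gradient (fun η : EuclideanSpace ℝ (Fin n) => 2 * ⟪η, gradient r x⟫_ℝ) ξ = (2:ℝ) • gradient r x :=
    ((hasGradientAt_inner_right _ ξ).const_mul' 2).gradient
  -- gradients in x
  set w : EuclideanSpace ℝ (Fin n) := (toDual ℝ (EuclideanSpace ℝ (Fin n))).symm ((innerSL ℝ ξ).comp (fderiv ℝ g x)) with hwdef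
  have hw : HasGradientAt (fun y => ⟪ξ, g y⟫_ℝ) w x := hasGradientAt_inner_comp (hgd x) ξ
  have e3 : gradient (fun y => 2 * ⟪ξ, gradient r y⟫_ℝ) x = ((2 * lam) * r x) • w := by
    have hfeq : (fun y => 2 * ⟪ξ, gradient r y⟫_ℝ)
        = fun y => (2 * lam) * (r y * ⟪ξ, g y⟫_ℝ) := by
      funext y; rw [hG y, real_inner_smul_right]; ring
    rw [hfeq, (((hr' x).mul' hw).const_mul' (2 * lam)).gradient, hs]
    rw [zero_smul, add_zero, smul_smul]
  set q : EuclideanSpace ℝ (Fin n) := gradient (fun y => ‖g y‖ ^ 2) x with hqdef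
  have hN : HasGradientAt (fun y => ‖g y‖ ^ 2) q x := by
    have : DifferentiableAt ℝ (fun y => ‖g y‖ ^ 2) x := by
      have := (hgd x).norm_sq ℝ
      exact this
    exact this.hasGradientAt
  have e4 : gradient (fun y => ‖ξ‖ ^ 2 - ‖gradient r y‖ ^ 2) x
      = -((lam ^ 2) • ((r x * r x) • q
          + (‖g x‖ ^ 2) • (r x • ((lam * r x) • g x) + r x • ((lam * r x) • g x)))) := by
    have hfeq : (fun y => ‖ξ‖ ^ 2 - ‖gradient r y‖ ^ 2)
        = fun y => ‖ξ‖ ^ 2 - lam ^ 2 * ((r y * r y) * ‖g y‖ ^ 2) := by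
      funext y; rw [hG y, norm_smul, Real.norm_eq_abs, mul_pow, sq_abs]; ring
    rw [hfeq]
    exact (((((hr' x).mul' (hr' x)).mul' hN).const_mul' (lam ^ 2)).const_sub' _).gradient
  -- assemble the bracket
  have hbr : poissonBracket
        (fun z ζ => ‖ζ‖ ^ 2 - ‖gradient r z‖ ^ 2)
        (fun z ζ => 2 * ⟪ζ, gradient r z⟫_ℝ) x ξ
      = 4 * lam * r x * ⟪ξ, w⟫_ℝ + 2 * lam ^ 3 * (r x) ^ 3 * ⟪q, g x⟫_ℝ
        + 4 * lam ^ 4 * (r x) ^ 3 * ‖g x‖ ^ 4 := by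
    simp only [poissonBracket]
    rw [e1, e2, e3, e4, hG x]
    simp only [inner_smul_left, inner_smul_right, inner_add_left, inner_neg_left,
      real_inner_self_eq_norm_sq, RCLike.conj_to_real, map_ofNat, conj_trivial]
    ring
  have hexp3 : Real.exp (3 * lam * ψ x) = (r x) ^ 3 := by
    rw [hrdef]
    rw [show (3 : ℝ) * lam * ψ x = (3 : ℕ) * (lam * ψ x) by push_cast; ring,
      Real.exp_nat_mul]
  -- norm of ξ
  have hxi : ‖ξ‖ ^ 2 = lam ^ 2 * (r x) ^ 2 * ‖g x‖ ^ 2 := by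
    rw [h2, hG x, norm_smul, Real.norm_eq_abs, mul_pow, sq_abs]; ring
  have hwb : ‖w‖ ≤ ‖ξ‖ * ‖fderiv ℝ g x‖ := norm_grad_inner_comp ξ
  have hb1 : |⟪ξ, w⟫_ℝ| ≤ lam ^ 2 * (r x) ^ 2 * ‖g x‖ ^ 2 * ‖fderiv ℝ g x‖ := by
    calc |⟪ξ, w⟫_ℝ| ≤ ‖ξ‖ * ‖w‖ := abs_real_inner_le_norm ξ w
      _ ≤ ‖ξ‖ * (‖ξ‖ * ‖fderiv ℝ g x‖) := by
          apply mul_le_mul_of_nonneg_left hwb (norm_nonneg _)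
      _ = ‖ξ‖ ^ 2 * ‖fderiv ℝ g x‖ := by ring
      _ = lam ^ 2 * (r x) ^ 2 * ‖g x‖ ^ 2 * ‖fderiv ℝ g x‖ := by rw [hxi]
  have hb2 : |⟪q, g x⟫_ℝ| ≤ ‖q‖ * ‖g x‖ := abs_real_inner_le_norm q (g x)
  rw [hbr, hexp3]
  have hstep : |4 * lam * r x * ⟪ξ, w⟫_ℝ + 2 * lam ^ 3 * (r x) ^ 3 * ⟪q, g x⟫_ℝ
      + 4 * lam ^ 4 * (r x) ^ 3 * ‖g x‖ ^ 4 - 4 * (r x) ^ 3 * lam ^ 4 * ‖g x‖ ^ 4|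
      ≤ 4 * lam * r x * |⟪ξ, w⟫_ℝ| + 2 * lam ^ 3 * (r x) ^ 3 * |⟪q, g x⟫_ℝ| := by
    have : 4 * lam * r x * ⟪ξ, w⟫_ℝ + 2 * lam ^ 3 * (r x) ^ 3 * ⟪q, g x⟫_ℝ
      + 4 * lam ^ 4 * (r x) ^ 3 * ‖g x‖ ^ 4 - 4 * (r x) ^ 3 * lam ^ 4 * ‖g x‖ ^ 4
      = 4 * lam * r x * ⟪ξ, w⟫_ℝ + 2 * lam ^ 3 * (r x) ^ 3 * ⟪q, g x⟫_ℝ := by ring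
    rw [this]
    calc |4 * lam * r x * ⟪ξ, w⟫_ℝ + 2 * lam ^ 3 * (r x) ^ 3 * ⟪q, g x⟫_ℝ|
        ≤ |4 * lam * r x * ⟪ξ, w⟫_ℝ| + |2 * lam ^ 3 * (r x) ^ 3 * ⟪q, g x⟫_ℝ| :=
          abs_add_le _ _
      _ = 4 * lam * r x * |⟪ξ, w⟫_ℝ| + 2 * lam ^ 3 * (r x) ^ 3 * |⟪q, g x⟫_ℝ| := by
          have p1 : (0:ℝ) < 4 * lam * r x := by have := hrpos x; positivity
          have p2 : (0:ℝ) < 2 * lam ^ 3 * r x ^ 3 := by have := hrpos x; positivity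
          rw [abs_mul ((4:ℝ) * lam * r x) ⟪ξ, w⟫_ℝ, abs_mul ((2:ℝ) * lam ^ 3 * r x ^ 3) ⟪q, g x⟫_ℝ, abs_of_pos p1, abs_of_pos p2]
  refine hstep.trans ?_
  have t1 : 4 * lam * r x * |⟪ξ, w⟫_ℝ|
      ≤ 4 * ‖fderiv ℝ g x‖ * ‖g x‖ ^ 2 * lam ^ 3 * (r x) ^ 3 := by
    calc 4 * lam * r x * |⟪ξ, w⟫_ℝ|
        ≤ 4 * lam * r x * (lam ^ 2 * (r x) ^ 2 * ‖g x‖ ^ 2 * ‖fderiv ℝ g x‖) := by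
          apply mul_le_mul_of_nonneg_left hb1 (by positivity)
      _ = 4 * ‖fderiv ℝ g x‖ * ‖g x‖ ^ 2 * lam ^ 3 * (r x) ^ 3 := by ring
  have t2 : 2 * lam ^ 3 * (r x) ^ 3 * |⟪q, g x⟫_ℝ|
      ≤ 2 * ‖q‖ * ‖g x‖ * lam ^ 3 * (r x) ^ 3 := by
    calc 2 * lam ^ 3 * (r x) ^ 3 * |⟪q, g x⟫_ℝ|
        ≤ 2 * lam ^ 3 * (r x) ^ 3 * (‖q‖ * ‖g x‖) := by
          apply mul_le_mul_of_nonneg_left hb2 (by positivity)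
      _ = 2 * ‖q‖ * ‖g x‖ * lam ^ 3 * (r x) ^ 3 := by ring
  have := add_le_add t1 t2
  calc 4 * lam * r x * |⟪ξ, w⟫_ℝ| + 2 * lam ^ 3 * (r x) ^ 3 * |⟪q, g x⟫_ℝ|
      ≤ 4 * ‖fderiv ℝ g x‖ * ‖g x‖ ^ 2 * lam ^ 3 * (r x) ^ 3
        + 2 * ‖q‖ * ‖g x‖ * lam ^ 3 * (r x) ^ 3 := this
    _ = (4 * ‖fderiv ℝ g x‖ * ‖g x‖ ^ 2 + 2 * ‖q‖ * ‖g x‖) * lam ^ 3 * (r x) ^ 3 := by ring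

/-- for `ψ` smooth with `|∇ψ| ≥ c > 0` on the closure of a bounded
open set `U` and `φ = e^{lam·ψ}`, on the characteristic set
`p_φ(x,ξ) = 0` (i.e. `⟨ξ, ∇φ⟩ = 0` and `|ξ|² = |∇φ|²`) one has
`{Re p_φ, Im p_φ}(x,ξ) = 4 e^{3·lam·ψ}(lam⁴|∇ψ|⁴ + O(lam³))` uniformly, and in
particular for `lam` large enough the bracket is bounded below by a positive
constant there.  Here `Re p_φ(x,ξ) = |ξ|² − |∇φ(x)|²` and
`Im p_φ(x,ξ) = 2⟨ξ, ∇φ(x)⟩`. -/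
theorem stmt7 {n : ℕ} (U : Set (EuclideanSpace ℝ (Fin n)))
    (hUo : IsOpen U) (hUb : Bornology.IsBounded U)
    (ψ : EuclideanSpace ℝ (Fin n) → ℝ) (hψ : ContDiff ℝ (⊤ : ℕ∞) ψ)
    (c : ℝ) (hc : 0 < c)
    (hgrad : ∀ x ∈ closure U, c ≤ ‖gradient ψ x‖) :
    (∃ M : ℝ, ∀ lam : ℝ, 1 ≤ lam → ∀ x ∈ closure U,
      ∀ ξ : EuclideanSpace ℝ (Fin n),
        (⟪ξ, gradient (fun y => Real.exp (lam * ψ y)) x⟫_ℝ = 0 ∧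
          ‖ξ‖ ^ 2 = ‖gradient (fun y => Real.exp (lam * ψ y)) x‖ ^ 2) →
        |poissonBracket
            (fun z ζ => ‖ζ‖ ^ 2 - ‖gradient (fun y => Real.exp (lam * ψ y)) z‖ ^ 2)
            (fun z ζ => 2 * ⟪ζ, gradient (fun y => Real.exp (lam * ψ y)) z⟫_ℝ) x ξ
          - 4 * Real.exp (3 * lam * ψ x) * lam ^ 4 * ‖gradient ψ x‖ ^ 4|
          ≤ M * lam ^ 3 * Real.exp (3 * lam * ψ x)) ∧
    (∃ lam₀ : ℝ, ∀ lam : ℝ, lam₀ ≤ lam → ∃ C' > (0 : ℝ), ∀ x ∈ closure U,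
      ∀ ξ : EuclideanSpace ℝ (Fin n),
        (⟪ξ, gradient (fun y => Real.exp (lam * ψ y)) x⟫_ℝ = 0 ∧
          ‖ξ‖ ^ 2 = ‖gradient (fun y => Real.exp (lam * ψ y)) x‖ ^ 2) →
        C' ≤ poissonBracket
            (fun z ζ => ‖ζ‖ ^ 2 - ‖gradient (fun y => Real.exp (lam * ψ y)) z‖ ^ 2)
            (fun z ζ => 2 * ⟪ζ, gradient (fun y => Real.exp (lam * ψ y)) z⟫_ℝ) x ξ) := by
  have hK : IsCompact (closure U) := hUb.isCompact_closure
  -- continuity of the error coefficient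
  set Φ : EuclideanSpace ℝ (Fin n) → ℝ := fun x =>
    4 * ‖fderiv ℝ (gradient ψ) x‖ * ‖gradient ψ x‖ ^ 2
      + 2 * ‖gradient (fun y => ‖gradient ψ y‖ ^ 2) x‖ * ‖gradient ψ x‖ with hΦdef
  have cont1 : Continuous (fun x => fderiv ℝ (gradient ψ) x) :=
    (contDiff_gradient hψ).continuous_fderiv (by simp)
  have contg : Continuous (gradient ψ) := (contDiff_gradient hψ).continuous
  have contN : ContDiff ℝ (⊤ : ℕ∞) (fun y => ‖gradient ψ y‖ ^ 2) :=
    (contDiff_gradient hψ).norm_sq ℝ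
  have contq : Continuous (gradient (fun y => ‖gradient ψ y‖ ^ 2)) :=
    (contDiff_gradient contN).continuous
  have contΦ : Continuous Φ := by
    apply Continuous.add
    · exact (continuous_const.mul cont1.norm).mul (contg.norm.pow 2)
    · exact (continuous_const.mul contq.norm).mul contg.norm
  obtain ⟨M, hM⟩ := hK.exists_bound_of_continuousOn contΦ.continuousOn
  have part1 : ∀ lam : ℝ, 1 ≤ lam → ∀ x ∈ closure U,
      ∀ ξ : EuclideanSpace ℝ (Fin n),
        (⟪ξ, gradient (fun y => Real.exp (lam * ψ y)) x⟫_ℝ = 0 ∧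
          ‖ξ‖ ^ 2 = ‖gradient (fun y => Real.exp (lam * ψ y)) x‖ ^ 2) →
        |poissonBracket
            (fun z ζ => ‖ζ‖ ^ 2 - ‖gradient (fun y => Real.exp (lam * ψ y)) z‖ ^ 2)
            (fun z ζ => 2 * ⟪ζ, gradient (fun y => Real.exp (lam * ψ y)) z⟫_ℝ) x ξ
          - 4 * Real.exp (3 * lam * ψ x) * lam ^ 4 * ‖gradient ψ x‖ ^ 4|
          ≤ M * lam ^ 3 * Real.exp (3 * lam * ψ x) := by
    intro lam hlam x hx ξ ⟨h1, h2⟩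
    have hkey := key ψ hψ lam (lt_of_lt_of_le one_pos hlam) x ξ h1 h2
    refine hkey.trans ?_
    have hΦx : Φ x ≤ M := le_trans (le_abs_self _) (by simpa [Real.norm_eq_abs] using hM x hx)
    have hpos : (0:ℝ) ≤ lam ^ 3 * Real.exp (3 * lam * ψ x) := by positivity
    calc Φ x * lam ^ 3 * Real.exp (3 * lam * ψ x)
        = Φ x * (lam ^ 3 * Real.exp (3 * lam * ψ x)) := by ring
      _ ≤ M * (lam ^ 3 * Real.exp (3 * lam * ψ x)) := mul_le_mul_of_nonneg_right hΦx hpos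
      _ = M * lam ^ 3 * Real.exp (3 * lam * ψ x) := by ring
  refine ⟨⟨M, part1⟩, ?_⟩
  rcases (closure U).eq_empty_or_nonempty with hE | hNE
  · exact ⟨1, fun lam _ => ⟨1, one_pos, fun x hx => by rw [hE] at hx; exact absurd hx (by simp)⟩⟩
  obtain ⟨z, hz, hmin⟩ := hK.exists_isMinOn hNE hψ.continuous.continuousOn
  refine ⟨max 1 ((M + 1) / (4 * c ^ 4)), fun lam hlam => ?_⟩
  have hlam1 : (1:ℝ) ≤ lam := le_trans (le_max_left _ _) hlam
  have hlam0 : (0:ℝ) < lam := lt_of_lt_of_le one_pos hlam1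
  have hMc : M + 1 ≤ 4 * lam * c ^ 4 := by
    have h := le_trans (le_max_right 1 ((M + 1) / (4 * c ^ 4))) hlam
    rw [div_le_iff₀ (by positivity)] at h
    nlinarith
  refine ⟨Real.exp (3 * lam * ψ z), Real.exp_pos _, fun x hx ξ hξ => ?_⟩
  have hkey := part1 lam hlam1 x hx ξ hξ
  set br := poissonBracket
      (fun z ζ => ‖ζ‖ ^ 2 - ‖gradient (fun y => Real.exp (lam * ψ y)) z‖ ^ 2)
      (fun z ζ => 2 * ⟪ζ, gradient (fun y => Real.exp (lam * ψ y)) z⟫_ℝ) x ξ with hbrdef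
  have hlb := (abs_le.mp hkey).1
  set e := Real.exp (3 * lam * ψ x) with hedef
  have hepos : 0 < e := Real.exp_pos _
  have hbr : 4 * e * lam ^ 4 * ‖gradient ψ x‖ ^ 4 - M * lam ^ 3 * e ≤ br := by linarith
  have hN : c ≤ ‖gradient ψ x‖ := hgrad x hx
  have hN4 : c ^ 4 ≤ ‖gradient ψ x‖ ^ 4 := pow_le_pow_left₀ hc.le hN 4
  have hfac : M + 1 ≤ 4 * lam * ‖gradient ψ x‖ ^ 4 := by nlinarith
  have hlam3 : (1:ℝ) ≤ lam ^ 3 := one_le_pow₀ hlam1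
  have hee : Real.exp (3 * lam * ψ z) ≤ e := by
    apply Real.exp_le_exp.mpr
    have hle : ψ z ≤ ψ x := hmin hx
    nlinarith [mul_nonneg hlam0.le (sub_nonneg.mpr hle)]
  calc Real.exp (3 * lam * ψ z) ≤ e := hee
    _ ≤ e * (lam ^ 3 * (4 * lam * ‖gradient ψ x‖ ^ 4 - M)) := by
        apply le_mul_of_one_le_right hepos.le
        have h1 : (1:ℝ) ≤ 4 * lam * ‖gradient ψ x‖ ^ 4 - M := by linarith
        nlinarith
    _ = 4 * e * lam ^ 4 * ‖gradient ψ x‖ ^ 4 - M * lam ^ 3 * e := by ring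
    _ ≤ br := hbr
end
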